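/- Let A be a Hopf χ-coalgebra with antipode S and χ-action φ. Then for all x ∈ H and e ∈ E: φ_{x,e} ∘ S_x = S_{χ(e)x} ∘ φ_{x⁻¹, x⁻¹·(e⁻¹)}. -/

import Mathlib

/-!
Both sides are convolution inverses of the algebra map `φ_{x,e} : A_x → A_{χ(e)x}`, where the
convolution of `L : A_u → B` and `R : A_v → B` is `m ∘ (L ⊗ R) ∘ Δ_{u,v} : A_{uv} → B`.
`φ_{x,e} ∘ S_x` is a left inverse because `φ_{x,e}` is multiplicative and `S_x` is a left inverse
of the identity. `S_{χ(e)x} ∘ φ_{x⁻¹,x⁻¹·e⁻¹}` is a right inverse because `φ` carries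
`Δ_{x,x⁻¹}` to `Δ_{χ(e)x,(χ(e)x)⁻¹}` via `φ_{1, e(x·(x⁻¹·e⁻¹))} = φ_{1,1} = id`, and `S_{χ(e)x}` is a
right inverse of the identity. Coassociativity and counitality make convolution associative and
unital, so the two inverses agree.
-/

open TensorProduct

def fcast (k : Type) [CommRing k] {ι : Type} (M : ι → Type)
    [∀ i, AddCommGroup (M i)] [∀ i, Module k (M i)] {x y : ι} (h : x = y) :
    M x →ₗ[k] M y := by subst h; exact LinearMap.id

@[simp]
theorem fcast_self_apply (k : Type) [CommRing k] {ι : Type} (M : ι → Type)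
    [∀ i, AddCommGroup (M i)] [∀ i, Module k (M i)] {x : ι} (h : x = x) (a : M x) :
    fcast k M h a = a := rfl

@[simp]
theorem fcast_fcast (k : Type) [CommRing k] {ι : Type} (M : ι → Type)
    [∀ i, AddCommGroup (M i)] [∀ i, Module k (M i)] {x y z : ι} (h₁ : x = y) (h₂ : y = z)
    (a : M x) :
    fcast k M h₂ (fcast k M h₁ a) = fcast k M (h₁.trans h₂) a := by
  subst h₁ h₂; rfl

section HopfGroupCoalgebra

variable {k : Type} [CommRing k] {H : Type} [Group H]
  (A : H → Type) [∀ x, Ring (A x)] [∀ x, Algebra k (A x)]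
  (Δ : ∀ x y : H, A (x * y) →ₐ[k] A x ⊗[k] A y)

def Coassociative : Prop :=
  ∀ (x y z : H) (a : A (x * y * z)),
    (TensorProduct.assoc k (A x) (A y) (A z))
      ((TensorProduct.map (Δ x y).toLinearMap (LinearMap.id : A z →ₗ[k] A z)) (Δ (x * y) z a))
    = (TensorProduct.map (LinearMap.id : A x →ₗ[k] A x) (Δ y z).toLinearMap)
        (Δ x (y * z) (fcast k A (mul_assoc x y z) a))

def LeftCounital (ε : A 1 →ₐ[k] k) : Prop :=
  ∀ (x : H) (a : A (1 * x)),
    (TensorProduct.lid k (A x))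
      ((TensorProduct.map ε.toLinearMap (LinearMap.id : A x →ₗ[k] A x)) (Δ 1 x a))
    = fcast k A (one_mul x) a

def RightCounital (ε : A 1 →ₐ[k] k) : Prop :=
  ∀ (x : H) (a : A (x * 1)),
    (TensorProduct.rid k (A x))
      ((TensorProduct.map (LinearMap.id : A x →ₗ[k] A x) ε.toLinearMap) (Δ x 1 a))
    = fcast k A (mul_one x) a

variable (B : Type) [Ring B] [Algebra k B]

noncomputable def conv {u v : H} (L : A u →ₗ[k] B) (R : A v →ₗ[k] B) : A (u * v) →ₗ[k] B :=
  LinearMap.mul' k B ∘ₗ TensorProduct.map L R ∘ₗ (Δ u v).toLinearMap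

noncomputable def unitCounit (ε : A 1 →ₐ[k] k) : A 1 →ₗ[k] B :=
  Algebra.linearMap k B ∘ₗ ε.toLinearMap

variable {A Δ B}

theorem conv_apply {u v : H} (L : A u →ₗ[k] B) (R : A v →ₗ[k] B) (a : A (u * v)) :
    conv A Δ B L R a = LinearMap.mul' k B (TensorProduct.map L R (Δ u v a)) := rfl

theorem conv_fcast_left {u u' v : H} (h : u = u') (L : A u' →ₗ[k] B) (R : A v →ₗ[k] B)
    (a : A (u * v)) :
    conv A Δ B (L ∘ₗ fcast k A h) R a = conv A Δ B L R (fcast k A (by rw [h]) a) := by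
  subst h; rfl

theorem conv_fcast_right {u v v' : H} (h : v = v') (L : A u →ₗ[k] B) (R : A v' →ₗ[k] B)
    (a : A (u * v)) :
    conv A Δ B L (R ∘ₗ fcast k A h) a = conv A Δ B L R (fcast k A (by rw [h]) a) := by
  subst h; rfl

theorem conv_comp_of_map_delta {u v u' v' : H} {f : A u →ₗ[k] A u'} {g : A v →ₗ[k] A v'}
    {h : A (u * v) →ₗ[k] A (u' * v')}
    (hfg : ∀ a, TensorProduct.map f g (Δ u v a) = Δ u' v' (h a))
    (L : A u' →ₗ[k] B) (R : A v' →ₗ[k] B) (a : A (u * v)) :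
    conv A Δ B (L ∘ₗ f) (R ∘ₗ g) a = conv A Δ B L R (h a) := by
  rw [conv_apply, TensorProduct.map_comp, LinearMap.comp_apply, hfg, conv_apply]

theorem conv_algHom_comp {C : Type} [Ring C] [Algebra k C] (ψ : C →ₐ[k] B) {u v : H}
    (L : A u →ₗ[k] C) (R : A v →ₗ[k] C) :
    conv A Δ B (ψ.toLinearMap ∘ₗ L) (ψ.toLinearMap ∘ₗ R) = ψ.toLinearMap ∘ₗ conv A Δ C L R := by
  have hmul : LinearMap.mul' k B ∘ₗ TensorProduct.map ψ.toLinearMap ψ.toLinearMap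
      = ψ.toLinearMap ∘ₗ LinearMap.mul' k C :=
    TensorProduct.ext' fun c d => by simp
  simp only [conv, TensorProduct.map_comp, ← LinearMap.comp_assoc, hmul]

theorem algHom_comp_unitCounit {C : Type} [Ring C] [Algebra k C] (ψ : C →ₐ[k] B)
    (ε : A 1 →ₐ[k] k) :
    ψ.toLinearMap ∘ₗ unitCounit A C ε = unitCounit A B ε :=
  LinearMap.ext fun a => ψ.commutes (ε a)

theorem conv_algHom_comp_eq_unitCounit {ε : A 1 →ₐ[k] k} {u v : H} (ψ : A v →ₐ[k] B)
    {L : A u →ₗ[k] A v} {t : A (u * v) →ₗ[k] A 1}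
    (hL : conv A Δ (A v) L LinearMap.id = unitCounit A (A v) ε ∘ₗ t) :
    conv A Δ B (ψ.toLinearMap ∘ₗ L) ψ.toLinearMap = unitCounit A B ε ∘ₗ t := by
  have h := conv_algHom_comp (Δ := Δ) ψ L LinearMap.id
  rw [LinearMap.comp_id] at h
  rw [h, hL, ← LinearMap.comp_assoc, algHom_comp_unitCounit]

theorem conv_assoc (hΔ : Coassociative A Δ) {u v w : H}
    (L : A u →ₗ[k] B) (M : A v →ₗ[k] B) (N : A w →ₗ[k] B) (a : A (u * v * w)) :
    conv A Δ B (conv A Δ B L M) N a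
      = conv A Δ B L (conv A Δ B M N) (fcast k A (mul_assoc u v w) a) := by
  have hmul : LinearMap.mul' k B ∘ₗ TensorProduct.map (LinearMap.mul' k B ∘ₗ TensorProduct.map L M) N
      = (LinearMap.mul' k B ∘ₗ TensorProduct.map L (LinearMap.mul' k B ∘ₗ TensorProduct.map M N))
        ∘ₗ (TensorProduct.assoc k (A u) (A v) (A w)).toLinearMap :=
    TensorProduct.ext_threefold fun a b c => by simp [mul_assoc]
  calc conv A Δ B (conv A Δ B L M) N a
      = (LinearMap.mul' k B ∘ₗ TensorProduct.map (LinearMap.mul' k B ∘ₗ TensorProduct.map L M) N)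
          (TensorProduct.map (Δ u v).toLinearMap LinearMap.id (Δ (u * v) w a)) := by
        rw [LinearMap.comp_apply, TensorProduct.map_map]; rfl
    _ = conv A Δ B L (conv A Δ B M N) (fcast k A (mul_assoc u v w) a) := by
        rw [hmul, LinearMap.comp_apply, LinearEquiv.coe_coe, hΔ, LinearMap.comp_apply,
          TensorProduct.map_map]
        rfl

theorem unitCounit_conv {ε : A 1 →ₐ[k] k} (hε : LeftCounital A Δ ε) {u : H}
    (L : A u →ₗ[k] B) (a : A (1 * u)) :
    conv A Δ B (unitCounit A B ε) L a = L (fcast k A (one_mul u) a) := by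
  have hmul : LinearMap.mul' k B ∘ₗ TensorProduct.map (unitCounit A B ε) L
      = L ∘ₗ (TensorProduct.lid k (A u)).toLinearMap
          ∘ₗ TensorProduct.map ε.toLinearMap (LinearMap.id : A u →ₗ[k] A u) :=
    TensorProduct.ext' fun c d => by simp [unitCounit, ← Algebra.smul_def]
  rw [← hε]
  exact LinearMap.congr_fun hmul _

theorem conv_unitCounit {ε : A 1 →ₐ[k] k} (hε : RightCounital A Δ ε) {u : H}
    (L : A u →ₗ[k] B) (a : A (u * 1)) :
    conv A Δ B L (unitCounit A B ε) a = L (fcast k A (mul_one u) a) := by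
  have hmul : LinearMap.mul' k B ∘ₗ TensorProduct.map L (unitCounit A B ε)
      = L ∘ₗ (TensorProduct.rid k (A u)).toLinearMap
          ∘ₗ TensorProduct.map (LinearMap.id : A u →ₗ[k] A u) ε.toLinearMap :=
    TensorProduct.ext' fun c d => by simp [unitCounit, ← Algebra.commutes, ← Algebra.smul_def]
  rw [← hε]
  exact LinearMap.congr_fun hmul _

theorem eq_of_conv_eq_unitCounit (hΔ : Coassociative A Δ) {ε : A 1 →ₐ[k] k}
    (hεl : LeftCounital A Δ ε) (hεr : RightCounital A Δ ε) {u : H}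
    {F G : A u⁻¹ →ₗ[k] B} {P : A u →ₗ[k] B}
    (hFP : conv A Δ B F P = unitCounit A B ε ∘ₗ fcast k A (inv_mul_cancel u))
    (hPG : conv A Δ B P G = unitCounit A B ε ∘ₗ fcast k A (mul_inv_cancel u)) :
    F = G := by
  ext a
  have h : u⁻¹ = u⁻¹ * u * u⁻¹ := by group
  calc F a = conv A Δ B F (conv A Δ B P G) (fcast k A (mul_assoc _ _ _) (fcast k A h a)) := by
        rw [hPG, conv_fcast_right, conv_unitCounit hεr]; simp
    _ = conv A Δ B (conv A Δ B F P) G (fcast k A h a) := (conv_assoc hΔ F P G _).symm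
    _ = G a := by
        rw [hFP, conv_fcast_left, unitCounit_conv hεl]; simp

end HopfGroupCoalgebra

theorem action_apply_of_eq_one {k : Type} [CommRing k] {E H : Type} [Group E] [Group H]
    (χ : E →* H) {A : H → Type} [∀ x, Ring (A x)] [∀ x, Algebra k (A x)]
    (φ : ∀ (x : H) (e : E), A x →ₐ[k] A (χ e * x))
    (phi_one : ∀ (x : H) (a : A x),
      φ x 1 a = fcast k A (show x = χ (1 : E) * x by rw [map_one, one_mul]) a)
    {g : E} (hg : g = 1) {x : H} (hx : x = χ g * x) (a : A x) :
    φ x g a = fcast k A hx a := by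
  subst hg; exact phi_one x a

/-- The antipode of a Hopf `χ`-coalgebra is compatible with the `χ`-action:
`φ_{x,e} ∘ S_x = S_{χ(e)x} ∘ φ_{x⁻¹, x⁻¹·(e⁻¹)}`. -/
theorem hopfXiCoalgebra_antipode_action
    {k : Type} [CommRing k] {E H : Type} [Group E] [Group H]
    (χ : E →* H) (act : H →* MulAut E)
    (hequiv : ∀ (x : H) (e : E), χ (act x e) = x * χ e * x⁻¹)
    (A : H → Type) [∀ x, Ring (A x)] [∀ x, Algebra k (A x)]
    (Δ : ∀ x y : H, A (x * y) →ₐ[k] A x ⊗[k] A y)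
    (ε : A 1 →ₐ[k] k)
    (coassoc : ∀ (x y z : H) (a : A (x * y * z)),
      (TensorProduct.assoc k (A x) (A y) (A z))
        ((TensorProduct.map (Δ x y).toLinearMap (LinearMap.id : A z →ₗ[k] A z))
          (Δ (x*y) z a))
      = (TensorProduct.map (LinearMap.id : A x →ₗ[k] A x) (Δ y z).toLinearMap)
          (Δ x (y*z) (fcast k A (mul_assoc x y z) a)))
    (counit_left : ∀ (x : H) (a : A (1 * x)),
      (TensorProduct.lid k (A x))
        ((TensorProduct.map ε.toLinearMap (LinearMap.id : A x →ₗ[k] A x)) (Δ 1 x a))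
      = fcast k A (one_mul x) a)
    (counit_right : ∀ (x : H) (a : A (x * 1)),
      (TensorProduct.rid k (A x))
        ((TensorProduct.map (LinearMap.id : A x →ₗ[k] A x) ε.toLinearMap) (Δ x 1 a))
      = fcast k A (mul_one x) a)
    (S : ∀ x : H, A x⁻¹ →ₗ[k] A x)
    (hS_left : ∀ (x : H) (a : A (x⁻¹ * x)),
      (LinearMap.mul' k (A x))
        ((TensorProduct.map (S x) (LinearMap.id : A x →ₗ[k] A x)) (Δ x⁻¹ x a))
      = algebraMap k (A x) (ε (fcast k A (inv_mul_cancel x) a)))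
    (hS_right : ∀ (x : H) (a : A (x * x⁻¹)),
      (LinearMap.mul' k (A x))
        ((TensorProduct.map (LinearMap.id : A x →ₗ[k] A x) (S x)) (Δ x x⁻¹ a))
      = algebraMap k (A x) (ε (fcast k A (mul_inv_cancel x) a)))
    (φ : ∀ (x : H) (e : E), A x →ₐ[k] A (χ e * x))
    (phi_one : ∀ (x : H) (a : A x),
      φ x 1 a = fcast k A (show x = χ (1 : E) * x by rw [map_one, one_mul]) a)
    (phi_delta : ∀ (x y : H) (e f : E) (a : A (x * y)),
      (TensorProduct.map (φ x e).toLinearMap (φ y f).toLinearMap) (Δ x y a)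
        = Δ (χ e * x) (χ f * y)
            (fcast k A
              (show χ (e * act x f) * (x * y) = (χ e * x) * (χ f * y) by
                rw [map_mul, hequiv]; group)
              (φ (x * y) (e * act x f) a)))
    :
    ∀ (x : H) (e : E) (a : A x⁻¹),
      φ x e (S x a)
        = S (χ e * x)
            (fcast k A
              (show χ (act x⁻¹ e⁻¹) * x⁻¹ = (χ e * x)⁻¹ by rw [hequiv, map_inv]; group)
              (φ x⁻¹ (act x⁻¹ e⁻¹) a)) := by
  intro x e a
  have hf : χ (act x⁻¹ e⁻¹) * x⁻¹ = (χ e * x)⁻¹ := by rw [hequiv, map_inv]; group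
  have hunit : e * act x (act x⁻¹ e⁻¹) = 1 := by rw [map_inv act, MulAut.apply_inv_self, mul_inv_cancel]
  have hS : conv A Δ (A x) (S x) LinearMap.id
      = unitCounit A (A x) ε ∘ₗ fcast k A (inv_mul_cancel x) :=
    LinearMap.ext (hS_left x)
  have hδ : χ (e * act x (act x⁻¹ e⁻¹)) * (x * x⁻¹) = χ e * x * (χ (act x⁻¹ e⁻¹) * x⁻¹) := by
    rw [map_mul, hequiv]; group
  have hright : conv A Δ (A (χ e * x)) (φ x e).toLinearMap
      (S (χ e * x) ∘ₗ fcast k A hf ∘ₗ (φ x⁻¹ (act x⁻¹ e⁻¹)).toLinearMap)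
      = unitCounit A (A (χ e * x)) ε ∘ₗ fcast k A (mul_inv_cancel x) := by
    ext b
    calc _ = conv A Δ (A (χ e * x)) (LinearMap.id ∘ₗ (φ x e).toLinearMap)
          ((S (χ e * x) ∘ₗ fcast k A hf) ∘ₗ (φ x⁻¹ (act x⁻¹ e⁻¹)).toLinearMap) b := rfl
      _ = conv A Δ (A (χ e * x)) LinearMap.id (S (χ e * x) ∘ₗ fcast k A hf)
          (fcast k A hδ (φ (x * x⁻¹) (e * act x (act x⁻¹ e⁻¹)) b)) :=
        conv_comp_of_map_delta (h := fcast k A hδ ∘ₗ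
          (φ (x * x⁻¹) (e * act x (act x⁻¹ e⁻¹))).toLinearMap) (phi_delta x x⁻¹ e _) _ _ b
      _ = unitCounit A (A (χ e * x)) ε (fcast k A (mul_inv_cancel (χ e * x))
            (fcast k A (congrArg (χ e * x * ·) hf) (fcast k A hδ
              (φ (x * x⁻¹) (e * act x (act x⁻¹ e⁻¹)) b)))) := by
        rw [conv_fcast_right]; exact hS_right (χ e * x) _
      _ = _ := by
        rw [action_apply_of_eq_one χ φ phi_one hunit (by rw [hunit, map_one, one_mul]) b]
        simp only [fcast_fcast]; rfl
  exact LinearMap.congr_fun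
    (eq_of_conv_eq_unitCounit coassoc counit_left counit_right
      (conv_algHom_comp_eq_unitCounit (φ x e) hS) hright) a
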